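/- arXiv:2202.00076 — 5 statements merged into one kernel-verified Lean document; each statement's English description precedes it below -/
import Mathlib

section
/- Suppose the feature map φ : S × A → ℝ^d has linearly independent components (i.e., if φ(s,a)ᵀw = 0 for all (s,a) then w = 0), each map θ ↦ π_{θ,h}(s)(a) is differentiable on ℝ^m, for each h ∈ {1,…,H} there exists w_{r,h} ∈ ℝ^d with r_h(s,a) = φ(s,a)ᵀw_{r,h} for all (s,a), and Bellman completeness holds: for every θ ∈ ℝ^m, h ∈ {1,…,H} and w ∈ ℝ^d there exists w' ∈ ℝ^d such that ∑_{s'} p_h(s,a)(s') ∑_{a'} π_{θ,h+1}(s')(a') φ(s',a')ᵀw = φ(s,a)ᵀw' for all (s,a). Then for every h ∈ {1,…,H+1} there is a unique function w_h : ℝ^m → ℝ^d with Q_h^θ(s,a) = φ(s,a)ᵀ w_h(θ) for all θ, s, a; moreover each w_h is differentiable, and for every j ∈ {1,…,m} and all θ, s, a one has ∂Q_h^θ(s,a)/∂θ_j = φ(s,a)ᵀ (∂w_h(θ)/∂θ_j). -/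
/-!
Backward induction from `Q_{H+1} = 0`: if `Q_{h+1}^θ = φᵀ w_{h+1}(θ)`, Bellman completeness applied
to `w_{h+1}(θ)` turns the expectation term of the recursion into `φᵀ w'`, so
`Q_h^θ = φᵀ (w_{r,h} + w')`. Differentiability of `Q_h` in `θ` follows from the same recursion,
since it only multiplies and adds the differentiable `π_{θ,h+1}` and `Q_{h+1}`.
Independence of the features means that `w ↦ (φ(s,a)ᵀ w)_{s,a}` is injective, which gives
uniqueness of `w_h`. As an injective linear map between finite-dimensional spaces it has a
continuous linear left inverse, which transfers differentiability from `Q_h` to `w_h`; the chain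
rule then gives the gradient formula.
-/

open Matrix Function

theorem eq_of_forall_dotProduct_eq {R κ ι : Type*} [Ring R] [Fintype ι] {φ : κ → ι → R}
    (hφ : ∀ w, (∀ k, φ k ⬝ᵥ w = 0) → w = 0) {w₁ w₂ : ι → R}
    (h : ∀ k, φ k ⬝ᵥ w₁ = φ k ⬝ᵥ w₂) : w₁ = w₂ :=
  sub_eq_zero.mp (hφ _ fun k => by rw [dotProduct_sub, h, sub_self])

section Calculus

variable {𝕜 E F G ι : Type*} [NontriviallyNormedField 𝕜] [CompleteSpace 𝕜]
  [NormedAddCommGroup E] [NormedSpace 𝕜 E] [NormedAddCommGroup F] [NormedSpace 𝕜 F]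
  [NormedAddCommGroup G] [NormedSpace 𝕜 G] [Fintype ι]

theorem Differentiable.of_injective_comp [FiniteDimensional 𝕜 G] {L : F →L[𝕜] G}
    (hL : Injective L) {f : E → F} (hf : Differentiable 𝕜 (L ∘ f)) : Differentiable 𝕜 f := by
  obtain ⟨g, hg⟩ := ContinuousLinearMap.HasLeftInverse.of_injective_of_finiteDimensional hL
  have hf_eq : f = g ∘ L ∘ f := funext fun x => (hg (f x)).symm
  rw [hf_eq]
  exact g.differentiable.comp hf

theorem fderiv_const_dotProduct_apply {f : E → ι → 𝕜} {x : E} (hf : DifferentiableAt 𝕜 f x)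
    (v : ι → 𝕜) (y : E) : fderiv 𝕜 (fun x => v ⬝ᵥ f x) x y = v ⬝ᵥ fderiv 𝕜 f x y := by
  let l : (ι → 𝕜) →L[𝕜] 𝕜 := (dotProductBilin 𝕜 𝕜 v).toContinuousLinearMap
  change fderiv 𝕜 (l ∘ f) x y = l (fderiv 𝕜 f x y)
  rw [fderiv_comp x l.differentiableAt hf, l.fderiv]
  rfl

variable {κ : Type*} [Fintype κ] {φ : κ → ι → 𝕜}

theorem differentiable_of_forall_dotProduct (hφ : ∀ w, (∀ k, φ k ⬝ᵥ w = 0) → w = 0)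
    {f : E → ι → 𝕜} (hf : ∀ k, Differentiable 𝕜 fun x => φ k ⬝ᵥ f x) : Differentiable 𝕜 f := by
  have hinj : Injective (Matrix.of φ).mulVecLin.toContinuousLinearMap :=
    LinearMap.ker_eq_bot.mp (ker_mulVecLin_eq_bot_iff.mpr fun w hw => hφ w (congrFun hw))
  exact Differentiable.of_injective_comp hinj (differentiable_pi.mpr hf)

end Calculus

section BackwardRecursion

variable {Θ S A : Type*} [Fintype S] [Fintype A] {H : ℕ} {p : ℕ → S → A → S → ℝ}
  {r : ℕ → S → A → ℝ} {π : Θ → ℕ → S → A → ℝ} {Q : Θ → ℕ → S → A → ℝ}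

theorem differentiable_of_bellman_recursion [NormedAddCommGroup Θ] [NormedSpace ℝ Θ]
    (hπ_diff : ∀ h s a, Differentiable ℝ fun θ => π θ h s a)
    (hQtop : ∀ θ s a, Q θ (H + 1) s a = 0)
    (hQrec : ∀ θ h, 1 ≤ h → h ≤ H → ∀ s a,
      Q θ h s a = r h s a + ∑ s', p h s a s' * ∑ a', π θ (h + 1) s' a' * Q θ (h + 1) s' a')
    (h : ℕ) (h1 : 1 ≤ h) (hH : h ≤ H + 1) (s : S) (a : A) :
    Differentiable ℝ fun θ => Q θ h s a := by
  induction hH using Nat.decreasingInduction generalizing s a with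
  | self =>
    simp only [hQtop]
    exact differentiable_const 0
  | of_succ k hk ih =>
    have hQ_eq : (fun θ => Q θ k s a) = fun θ => r k s a +
        ∑ s', p k s a s' * ∑ a', π θ (k + 1) s' a' * Q θ (k + 1) s' a' :=
      funext fun θ => hQrec θ k h1 (by omega) s a
    rw [hQ_eq]
    exact (differentiable_const _).add <| Differentiable.fun_sum fun s' _ =>
      (Differentiable.fun_sum fun a' _ =>
        (hπ_diff _ s' a').mul (ih (by omega) s' a')).const_mul _

theorem exists_dotProduct_eq_of_bellman_complete {ι : Type*} [Fintype ι] (φ : S → A → ι → ℝ)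
    (hr_lin : ∀ h, 1 ≤ h → h ≤ H → ∃ w : ι → ℝ, ∀ s a, r h s a = φ s a ⬝ᵥ w)
    (hBellman : ∀ θ h, 1 ≤ h → h ≤ H → ∀ w : ι → ℝ, ∃ w' : ι → ℝ, ∀ s a,
      ∑ s', p h s a s' * ∑ a', π θ (h + 1) s' a' * (φ s' a' ⬝ᵥ w) = φ s a ⬝ᵥ w')
    (hQtop : ∀ θ s a, Q θ (H + 1) s a = 0)
    (hQrec : ∀ θ h, 1 ≤ h → h ≤ H → ∀ s a,
      Q θ h s a = r h s a + ∑ s', p h s a s' * ∑ a', π θ (h + 1) s' a' * Q θ (h + 1) s' a')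
    (h : ℕ) (h1 : 1 ≤ h) (hH : h ≤ H + 1) :
    ∃ w : Θ → ι → ℝ, ∀ θ s a, Q θ h s a = φ s a ⬝ᵥ w θ := by
  induction hH using Nat.decreasingInduction with
  | self => exact ⟨0, fun θ s a => by rw [hQtop, Pi.zero_apply, dotProduct_zero]⟩
  | of_succ k hk ih =>
    obtain ⟨w, hw⟩ := ih (by omega)
    obtain ⟨wr, hwr⟩ := hr_lin k h1 (by omega)
    choose w' hw' using fun θ => hBellman θ k h1 (by omega) (w θ)
    refine ⟨fun θ => wr + w' θ, fun θ s a => ?_⟩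
    rw [hQrec θ k h1 (by omega), hwr, dotProduct_add, ← hw' θ s a]
    simp only [hw]

end BackwardRecursion

theorem linear_bellman_completeness_implies_gradient_realizability_general
    {S A : Type*} [Fintype S] [Fintype A]
    (m H d : ℕ)
    (p : ℕ → S → A → S → ℝ) (r : ℕ → S → A → ℝ)
    (π : (Fin m → ℝ) → ℕ → S → A → ℝ)
    (φ : S → A → Fin d → ℝ)
    (hφ_indep : ∀ w : Fin d → ℝ, (∀ s a, φ s a ⬝ᵥ w = 0) → w = 0)
    (hπ_diff : ∀ h s a, Differentiable ℝ fun θ => π θ h s a)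
    (hr_lin : ∀ h, 1 ≤ h → h ≤ H → ∃ w : Fin d → ℝ, ∀ s a, r h s a = φ s a ⬝ᵥ w)
    (hBellman : ∀ (θ : Fin m → ℝ) (h : ℕ), 1 ≤ h → h ≤ H → ∀ w : Fin d → ℝ,
      ∃ w' : Fin d → ℝ, ∀ s a,
        ∑ s', p h s a s' * ∑ a', π θ (h + 1) s' a' * (φ s' a' ⬝ᵥ w) = φ s a ⬝ᵥ w')
    (Q : (Fin m → ℝ) → ℕ → S → A → ℝ)
    (hQtop : ∀ θ s a, Q θ (H + 1) s a = 0)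
    (hQrec : ∀ θ h, 1 ≤ h → h ≤ H → ∀ s a,
      Q θ h s a = r h s a
        + ∑ s', p h s a s' * ∑ a', π θ (h + 1) s' a' * Q θ (h + 1) s' a') :
    ∀ h, 1 ≤ h → h ≤ H + 1 →
      (∃! wf : (Fin m → ℝ) → Fin d → ℝ, ∀ θ s a, Q θ h s a = φ s a ⬝ᵥ wf θ) ∧
        ∀ wf : (Fin m → ℝ) → Fin d → ℝ, (∀ θ s a, Q θ h s a = φ s a ⬝ᵥ wf θ) →
          Differentiable ℝ wf ∧
            ∀ (j : Fin m) (θ : Fin m → ℝ) (s : S) (a : A),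
              fderiv ℝ (fun θ' => Q θ' h s a) θ (Pi.single j 1) =
                φ s a ⬝ᵥ fderiv ℝ wf θ (Pi.single j 1) := by
  intro h h1 hH
  have hφ : ∀ w, (∀ q : S × A, φ q.1 q.2 ⬝ᵥ w = 0) → w = 0 :=
    fun w hw => hφ_indep w fun s a => hw (s, a)
  obtain ⟨w, hw⟩ := exists_dotProduct_eq_of_bellman_complete φ hr_lin hBellman hQtop hQrec h h1 hH
  have hQ_diff := differentiable_of_bellman_recursion hπ_diff hQtop hQrec h h1 hH
  refine ⟨⟨w, hw, fun w' hw' => funext fun θ => eq_of_forall_dotProduct_eq hφ fun q =>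
    (hw' θ q.1 q.2).symm.trans (hw θ q.1 q.2)⟩, fun wf hwf => ?_⟩
  simp only [hwf] at hQ_diff ⊢
  have hwf_diff : Differentiable ℝ wf :=
    differentiable_of_forall_dotProduct hφ fun q => hQ_diff q.1 q.2
  exact ⟨hwf_diff, fun j θ s a => fderiv_const_dotProduct_apply (hwf_diff θ) _ _⟩

theorem linear_bellman_completeness_implies_gradient_realizability
    {S A : Type*} [Fintype S] [Fintype A] [Nonempty S] [Nonempty A]
    (m H d : ℕ)
    (p : ℕ → S → A → S → ℝ) (r : ℕ → S → A → ℝ)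
    (π : (Fin m → ℝ) → ℕ → S → A → ℝ)
    (φ : S → A → Fin d → ℝ)
    (hp_nonneg : ∀ h, 1 ≤ h → h ≤ H → ∀ s a s', 0 ≤ p h s a s')
    (hp_sum : ∀ h, 1 ≤ h → h ≤ H → ∀ s a, ∑ s', p h s a s' = 1)
    (hπ_nonneg : ∀ θ h, 1 ≤ h → h ≤ H + 1 → ∀ s a, 0 ≤ π θ h s a)
    (hπ_sum : ∀ θ h, 1 ≤ h → h ≤ H + 1 → ∀ s, ∑ a, π θ h s a = 1)
    (hφ_indep : ∀ w : Fin d → ℝ, (∀ s a, φ s a ⬝ᵥ w = 0) → w = 0)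
    (hπ_diff : ∀ h s a, Differentiable ℝ fun θ => π θ h s a)
    (hr_lin : ∀ h, 1 ≤ h → h ≤ H → ∃ w : Fin d → ℝ, ∀ s a, r h s a = φ s a ⬝ᵥ w)
    (hBellman : ∀ (θ : Fin m → ℝ) (h : ℕ), 1 ≤ h → h ≤ H → ∀ w : Fin d → ℝ,
      ∃ w' : Fin d → ℝ, ∀ s a,
        ∑ s', p h s a s' * ∑ a', π θ (h + 1) s' a' * (φ s' a' ⬝ᵥ w) = φ s a ⬝ᵥ w')
    (Q : (Fin m → ℝ) → ℕ → S → A → ℝ)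
    (hQtop : ∀ θ s a, Q θ (H + 1) s a = 0)
    (hQrec : ∀ θ h, 1 ≤ h → h ≤ H → ∀ s a,
      Q θ h s a = r h s a
        + ∑ s', p h s a s' * ∑ a', π θ (h + 1) s' a' * Q θ (h + 1) s' a') :
    ∀ h, 1 ≤ h → h ≤ H + 1 →
      (∃! wf : (Fin m → ℝ) → Fin d → ℝ, ∀ θ s a, Q θ h s a = φ s a ⬝ᵥ wf θ) ∧
        ∀ wf : (Fin m → ℝ) → Fin d → ℝ, (∀ θ s a, Q θ h s a = φ s a ⬝ᵥ wf θ) →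
          Differentiable ℝ wf ∧
            ∀ (j : Fin m) (θ : Fin m → ℝ) (s : S) (a : A),
              fderiv ℝ (fun θ' => Q θ' h s a) θ (Pi.single j 1) =
                φ s a ⬝ᵥ fderiv ℝ wf θ (Pi.single j 1) :=
  linear_bellman_completeness_implies_gradient_realizability_general m H d p r π φ hφ_indep hπ_diff
    hr_lin hBellman Q hQtop hQrec
end

section
/- Fix λ > 0 and d, K, H ∈ ℕ with K ≥ 1, and for each h ∈ {1,…,H} and k ∈ {1,…,K} let u_{h,k} ∈ ℝ^d, ρ_{h,k} ∈ ℝ, and z_{h,k} ∈ ℝ^d be given. The matrix Σ̂_h := (1/K)(λ I_d + ∑_{k=1}^K u_{h,k} u_{h,k}ᵀ) is positive definite; set ŵ_{r,h} := Σ̂_h^{-1} (1/K) ∑_{k=1}^K ρ_{h,k} u_{h,k} and M̂_h := Σ̂_h^{-1} (1/K) ∑_{k=1}^K u_{h,k} z_{h,k}ᵀ. Define the fitted iterates backwards by ŵ_{H+1}^{FPG} := 0 and, for h = H,…,1, ŵ_h^{FPG} := the unique global minimizer over w ∈ ℝ^d of ∑_{k=1}^K (u_{h,k}ᵀ w − ρ_{h,k}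 − z_{h,k}ᵀ ŵ_{h+1}^{FPG})² + λ‖w‖², and the model-based iterates by ŵ_{H+1}^{MB} := 0 and ŵ_h^{MB} := ŵ_{r,h} + M̂_h ŵ_{h+1}^{MB}. Then ŵ_h^{FPG} = ŵ_h^{MB} for every h ∈ {1,…,H+1}. -/
open Matrix Finset

/-!
At level `h` the FPG objective is a ridge regression of the responses
`ρ h k + z h k ⬝ᵥ w_{h+1}` on the features `u h k`. Its loss satisfies
`L (w + v) = L w + 2 ⟪G w - b, v⟫ + ⟪G v, v⟫` with `G = λ I + ∑ u uᵀ = K Σ̂_h` positive definite,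
so a vector solving the normal equations `G w = b` is the unique minimiser. The model-based
iterate solves exactly these normal equations once `w_{h+1}^{FPG} = w_{h+1}^{MB}`, and the
theorem follows by downward induction from `H + 1`.
-/

section Ridge

variable {ι n : Type*} [Fintype n]

def ridgeLoss (s : Finset ι) (u : ι → n → ℝ) (y : ι → ℝ) (lam : ℝ) (w : n → ℝ) : ℝ :=
  ∑ k ∈ s, (u k ⬝ᵥ w - y k) ^ 2 + lam * ∑ i, w i ^ 2

lemma sum_vecMulVec_mulVec (s : Finset ι) (a b : ι → n → ℝ) (x : n → ℝ) :
    (∑ k ∈ s, vecMulVec (a k) (b k)) *ᵥ x = ∑ k ∈ s, (b k ⬝ᵥ x) • a k := by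
  simp only [sum_mulVec, vecMulVec_mulVec, op_smul_eq_smul]

variable [DecidableEq n]

def ridgeGram (s : Finset ι) (u : ι → n → ℝ) (lam : ℝ) : Matrix n n ℝ :=
  lam • 1 + ∑ k ∈ s, vecMulVec (u k) (u k)

lemma ridgeGram_mulVec_dotProduct (s : Finset ι) (u : ι → n → ℝ) (lam : ℝ) (x v : n → ℝ) :
    ridgeGram s u lam *ᵥ x ⬝ᵥ v = lam * (x ⬝ᵥ v) + ∑ k ∈ s, (u k ⬝ᵥ x) * (u k ⬝ᵥ v) := by
  simp only [ridgeGram, add_mulVec, smul_mulVec, one_mulVec, sum_vecMulVec_mulVec,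
    add_dotProduct, smul_dotProduct, sum_dotProduct, smul_eq_mul]

lemma ridgeGram_posDef (s : Finset ι) (u : ι → n → ℝ) {lam : ℝ} (hlam : 0 < lam) :
    (ridgeGram s u lam).PosDef :=
  (PosDef.one.smul hlam).add_posSemidef <|
    posSemidef_sum s fun k _ => by simpa using posSemidef_vecMulVec_self_star (u k)

lemma ridgeLoss_add (s : Finset ι) (u : ι → n → ℝ) (y : ι → ℝ) (lam : ℝ) (w v : n → ℝ) :
    ridgeLoss s u y lam (w + v) = ridgeLoss s u y lam w
      + 2 * ((ridgeGram s u lam *ᵥ w - ∑ k ∈ s, y k • u k) ⬝ᵥ v)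
      + ridgeGram s u lam *ᵥ v ⬝ᵥ v := by
  simp only [ridgeLoss, sub_dotProduct, ridgeGram_mulVec_dotProduct, sum_dotProduct,
    smul_dotProduct, smul_eq_mul, dotProduct_add, Pi.add_apply]
  have hres : ∑ k ∈ s, (u k ⬝ᵥ w + u k ⬝ᵥ v - y k) ^ 2 = ∑ k ∈ s, (u k ⬝ᵥ w - y k) ^ 2
      + 2 * (∑ k ∈ s, u k ⬝ᵥ w * u k ⬝ᵥ v - ∑ k ∈ s, y k * u k ⬝ᵥ v)
      + ∑ k ∈ s, u k ⬝ᵥ v * u k ⬝ᵥ v := by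
    simp only [← sum_sub_distrib, mul_sum, ← sum_add_distrib]
    exact sum_congr rfl fun k _ => by ring
  have hnorm : ∑ i, (w i + v i) ^ 2 = ∑ i, w i ^ 2 + 2 * (w ⬝ᵥ v) + v ⬝ᵥ v := by
    simp only [dotProduct, mul_sum, ← sum_add_distrib]
    exact sum_congr rfl fun i _ => by ring
  rw [hres, hnorm]
  ring

lemma eq_of_ridgeLoss_le {s : Finset ι} {u : ι → n → ℝ} {y : ι → ℝ} {lam : ℝ} (hlam : 0 < lam)
    {w e : n → ℝ} (hw : ridgeGram s u lam *ᵥ w = ∑ k ∈ s, y k • u k)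
    (he : ridgeLoss s u y lam e ≤ ridgeLoss s u y lam w) : e = w := by
  have hexp := ridgeLoss_add s u y lam w (e - w)
  rw [add_sub_cancel, hw, sub_self, zero_dotProduct, mul_zero, add_zero] at hexp
  by_contra hne
  have hpos := (ridgeGram_posDef s u hlam).dotProduct_mulVec_pos (sub_ne_zero.mpr hne)
  rw [star_trivial, dotProduct_comm] at hpos
  linarith

end Ridge

theorem fpg_equals_model_based (d K H : ℕ) (hK : 1 ≤ K) (lam : ℝ) (hlam : 0 < lam)
    (u : ℕ → ℕ → Fin d → ℝ) (ρ : ℕ → ℕ → ℝ) (z : ℕ → ℕ → Fin d → ℝ)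
    (Shat : ℕ → Matrix (Fin d) (Fin d) ℝ)
    (hShat : ∀ h, Shat h = (K : ℝ)⁻¹ •
      (lam • (1 : Matrix (Fin d) (Fin d) ℝ) + ∑ k ∈ Icc 1 K, vecMulVec (u h k) (u h k)))
    (wr : ℕ → Fin d → ℝ)
    (hwr : ∀ h, wr h = (Shat h)⁻¹ *ᵥ ((K : ℝ)⁻¹ • ∑ k ∈ Icc 1 K, ρ h k • u h k))
    (Mhat : ℕ → Matrix (Fin d) (Fin d) ℝ)
    (hMhat : ∀ h, Mhat h =
      (Shat h)⁻¹ * ((K : ℝ)⁻¹ • ∑ k ∈ Icc 1 K, vecMulVec (u h k) (z h k)))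
    (wFPG : ℕ → Fin d → ℝ)
    (hFPGtop : wFPG (H + 1) = 0)
    (hFPGmin : ∀ h, 1 ≤ h → h ≤ H → ∀ w : Fin d → ℝ,
      (∑ k ∈ Icc 1 K, (u h k ⬝ᵥ wFPG h - ρ h k - z h k ⬝ᵥ wFPG (h + 1)) ^ 2)
          + lam * ∑ i, wFPG h i ^ 2
        ≤ (∑ k ∈ Icc 1 K, (u h k ⬝ᵥ w - ρ h k - z h k ⬝ᵥ wFPG (h + 1)) ^ 2)
          + lam * ∑ i, w i ^ 2)
    (wMB : ℕ → Fin d → ℝ)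
    (hMBtop : wMB (H + 1) = 0)
    (hMBrec : ∀ h, 1 ≤ h → h ≤ H → wMB h = wr h + Mhat h *ᵥ wMB (h + 1)) :
    (∀ h, 1 ≤ h → h ≤ H → (Shat h).PosDef) ∧
      ∀ h, 1 ≤ h → h ≤ H + 1 → wFPG h = wMB h := by
  have hKinv : (0 : ℝ) < (K : ℝ)⁻¹ := inv_pos.mpr (by exact_mod_cast hK)
  have hShat_gram : ∀ h, Shat h = (K : ℝ)⁻¹ • ridgeGram (Icc 1 K) (u h) lam := hShat
  have hPD : ∀ h, (Shat h).PosDef := fun h => hShat_gram h ▸ (ridgeGram_posDef _ _ hlam).smul hKinv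
  refine ⟨fun h _ _ => hPD h, fun h h1 hh => ?_⟩
  refine Nat.decreasingInduction' (fun k hk hhk ih => ?_) hh (by rw [hFPGtop, hMBtop])
  have hS : Shat k *ᵥ wMB k = (K : ℝ)⁻¹ • (∑ j ∈ Icc 1 K, ρ k j • u k j
      + (∑ j ∈ Icc 1 K, vecMulVec (u k j) (z k j)) *ᵥ wMB (k + 1)) := by
    rw [hMBrec k (by omega) (by omega), hwr, hMhat, ← mulVec_mulVec, ← mulVec_add,
      mulVec_mulVec, mul_nonsing_inv _ (hPD k).det_pos.ne'.isUnit, one_mulVec, smul_mulVec,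
      smul_add]
  have hMB : ridgeGram (Icc 1 K) (u k) lam *ᵥ wMB k
      = ∑ j ∈ Icc 1 K, (ρ k j + z k j ⬝ᵥ wMB (k + 1)) • u k j := by
    rw [hShat_gram, smul_mulVec, sum_vecMulVec_mulVec, ← sum_add_distrib] at hS
    simpa only [add_smul] using smul_right_injective _ hKinv.ne' hS
  refine eq_of_ridgeLoss_le hlam hMB ?_
  simpa only [ridgeLoss, sub_sub, ih] using hFPGmin k (by omega) (by omega) (wMB k)
end

section
/- Assume each map θ ↦ π_{θ,h}(s)(a) is differentiable on ℝ^m. Then for every h ∈ {1,…,H+1} and (s,a) ∈ S × A the map θ ↦ Q_h^θ(s,a) is differentiable, and the Policy Gradient Bellman equation holds: for every j ∈ {1,…,m}, every h ∈ {1,…,H}, and all (s,a), ∂Q_h^θ(s,a)/∂θ_j = ∑_{s'} p_h(s,a)(s') ∑_{a'} [ (∂π_{θ,h+1}(s')(a')/∂θ_j) · Q_{h+1}^θ(s',a') + π_{θ,h+1}(s')(a') · (∂Q_{h+1}^θ(s',a')/∂θ_j) ]. -/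
open Finset

/-!
`Q_h^θ(s,a)` is `r_h(s,a)` plus a finite sum of products `π_{θ,h+1} · Q_{h+1}^θ`, so backward
induction on `h` from `Q_{H+1}^θ = 0` gives differentiability, and the sum and product rules
differentiate the recursion term by term.
-/

section BellmanBackup

variable {S A E : Type*} [Fintype S] [Fintype A] [NormedAddCommGroup E] [NormedSpace ℝ E]

/-- The right-hand side of the Bellman recursion at `(h, s, a)`, with `P = p_h(s,a)`,
`π = π_{θ,h+1}` and `Q = Q_{h+1}^θ`. -/
def bellmanBackup (r : ℝ) (P : S → ℝ) (π Q : S → A → ℝ) : ℝ :=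
  r + ∑ s', P s' * ∑ a', π s' a' * Q s' a'

theorem hasFDerivAt_bellmanBackup (r : ℝ) (P : S → ℝ) {π Q : E → S → A → ℝ}
    {π' Q' : S → A → E →L[ℝ] ℝ} {θ : E}
    (hπ : ∀ s a, HasFDerivAt (fun θ => π θ s a) (π' s a) θ)
    (hQ : ∀ s a, HasFDerivAt (fun θ => Q θ s a) (Q' s a) θ) :
    HasFDerivAt (fun θ => bellmanBackup r P (π θ) (Q θ))
      (∑ s', P s' • ∑ a', (Q θ s' a' • π' s' a' + π θ s' a' • Q' s' a')) θ := by
  have hprod : ∀ s' a', HasFDerivAt (fun θ => π θ s' a' * Q θ s' a')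
      (Q θ s' a' • π' s' a' + π θ s' a' • Q' s' a') θ := fun s' a' =>
    ((hπ s' a').mul (hQ s' a')).congr_fderiv (add_comm _ _)
  exact (HasFDerivAt.fun_sum fun s' _ =>
    (HasFDerivAt.fun_sum fun a' _ => hprod s' a').const_mul (P s')).const_add r

theorem differentiable_bellmanBackup (r : ℝ) (P : S → ℝ) {π Q : E → S → A → ℝ}
    (hπ : ∀ s a, Differentiable ℝ fun θ => π θ s a)
    (hQ : ∀ s a, Differentiable ℝ fun θ => Q θ s a) :
    Differentiable ℝ fun θ => bellmanBackup r P (π θ) (Q θ) := fun θ =>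
  (hasFDerivAt_bellmanBackup r P (fun s a => (hπ s a θ).hasFDerivAt)
    (fun s a => (hQ s a θ).hasFDerivAt)).differentiableAt

theorem fderiv_bellmanBackup_apply (r : ℝ) (P : S → ℝ) {π Q : E → S → A → ℝ} {θ : E}
    (hπ : ∀ s a, DifferentiableAt ℝ (fun θ => π θ s a) θ)
    (hQ : ∀ s a, DifferentiableAt ℝ (fun θ => Q θ s a) θ) (v : E) :
    fderiv ℝ (fun θ => bellmanBackup r P (π θ) (Q θ)) θ v =
      ∑ s', P s' * ∑ a', (fderiv ℝ (fun θ => π θ s' a') θ v * Q θ s' a'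
        + π θ s' a' * fderiv ℝ (fun θ => Q θ s' a') θ v) := by
  rw [(hasFDerivAt_bellmanBackup r P (fun s a => (hπ s a).hasFDerivAt)
    (fun s a => (hQ s a).hasFDerivAt)).fderiv]
  simp only [_root_.sum_apply, smul_apply, add_apply, smul_eq_mul, mul_comm (Q θ _ _)]

end BellmanBackup

theorem policy_gradient_bellman_equation_general
    {S A : Type*} [Fintype S] [Fintype A]
    (m H : ℕ)
    (p : ℕ → S → A → S → ℝ) (r : ℕ → S → A → ℝ)
    (π : (Fin m → ℝ) → ℕ → S → A → ℝ)
    (hπ_diff : ∀ h s a, Differentiable ℝ fun θ => π θ h s a)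
    (Q : (Fin m → ℝ) → ℕ → S → A → ℝ)
    (hQtop : ∀ θ s a, Q θ (H + 1) s a = 0)
    (hQrec : ∀ θ h, 1 ≤ h → h ≤ H → ∀ s a,
      Q θ h s a = r h s a
        + ∑ s', p h s a s' * ∑ a', π θ (h + 1) s' a' * Q θ (h + 1) s' a') :
    (∀ h, 1 ≤ h → h ≤ H + 1 → ∀ s a, Differentiable ℝ fun θ => Q θ h s a) ∧
      ∀ (j : Fin m) (θ : Fin m → ℝ) (h : ℕ), 1 ≤ h → h ≤ H → ∀ s a,
        fderiv ℝ (fun θ' => Q θ' h s a) θ (Pi.single j 1) =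
          ∑ s', p h s a s' * ∑ a',
            (fderiv ℝ (fun θ' => π θ' (h + 1) s' a') θ (Pi.single j 1)
                * Q θ (h + 1) s' a'
              + π θ (h + 1) s' a'
                * fderiv ℝ (fun θ' => Q θ' (h + 1) s' a') θ (Pi.single j 1)) := by
  have hQ_eq : ∀ h, 1 ≤ h → h ≤ H → ∀ s a, (fun θ => Q θ h s a) =
      fun θ => bellmanBackup (r h s a) (p h s a) (π θ (h + 1)) (Q θ (h + 1)) :=
    fun h h1 hH s a => funext fun θ => hQrec θ h h1 hH s a
  have hQ_diff : ∀ h, 1 ≤ h → h ≤ H + 1 → ∀ s a, Differentiable ℝ fun θ => Q θ h s a := by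
    intro h h1 hH
    induction hH using Nat.decreasingInduction with
    | self => simp only [hQtop]; exact fun _ _ => differentiable_const 0
    | of_succ k hk ih =>
      intro s a
      rw [hQ_eq k h1 (by omega)]
      exact differentiable_bellmanBackup _ _ (hπ_diff _) (ih (by omega))
  refine ⟨hQ_diff, fun j θ h h1 hH s a => ?_⟩
  rw [hQ_eq h h1 hH]
  exact fderiv_bellmanBackup_apply _ _ (fun s a => hπ_diff _ s a θ)
    (fun s a => hQ_diff (h + 1) (by omega) (by omega) s a θ) _

theorem policy_gradient_bellman_equation
    {S A : Type*} [Fintype S] [Fintype A] [Nonempty S] [Nonempty A]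
    (m H : ℕ)
    (p : ℕ → S → A → S → ℝ) (r : ℕ → S → A → ℝ)
    (π : (Fin m → ℝ) → ℕ → S → A → ℝ)
    (hp_nonneg : ∀ h, 1 ≤ h → h ≤ H → ∀ s a s', 0 ≤ p h s a s')
    (hp_sum : ∀ h, 1 ≤ h → h ≤ H → ∀ s a, ∑ s', p h s a s' = 1)
    (hπ_nonneg : ∀ θ h, 1 ≤ h → h ≤ H + 1 → ∀ s a, 0 ≤ π θ h s a)
    (hπ_sum : ∀ θ h, 1 ≤ h → h ≤ H + 1 → ∀ s, ∑ a, π θ h s a = 1)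
    (hπ_diff : ∀ h s a, Differentiable ℝ fun θ => π θ h s a)
    (Q : (Fin m → ℝ) → ℕ → S → A → ℝ)
    (hQtop : ∀ θ s a, Q θ (H + 1) s a = 0)
    (hQrec : ∀ θ h, 1 ≤ h → h ≤ H → ∀ s a,
      Q θ h s a = r h s a
        + ∑ s', p h s a s' * ∑ a', π θ (h + 1) s' a' * Q θ (h + 1) s' a') :
    (∀ h, 1 ≤ h → h ≤ H + 1 → ∀ s a, Differentiable ℝ fun θ => Q θ h s a) ∧
      ∀ (j : Fin m) (θ : Fin m → ℝ) (h : ℕ), 1 ≤ h → h ≤ H → ∀ s a,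
        fderiv ℝ (fun θ' => Q θ' h s a) θ (Pi.single j 1) =
          ∑ s', p h s a s' * ∑ a',
            (fderiv ℝ (fun θ' => π θ' (h + 1) s' a') θ (Pi.single j 1)
                * Q θ (h + 1) s' a'
              + π θ (h + 1) s' a'
                * fderiv ℝ (fun θ' => Q θ' (h + 1) s' a') θ (Pi.single j 1)) :=
  policy_gradient_bellman_equation_general m H p r π hπ_diff Q hQtop hQrec
end

section
/- Let V be a vector space over ℝ, H ∈ ℕ, and for each h ∈ {1,…,H} let P_h, P̂_h : V → V be linear maps and u_h, û_h ∈ V. Define Q_{H+1} := 0 and Q_h := u_h + P_h(Q_{h+1}) for h = H,…,1, and likewise Q̂_{H+1} := 0 and Q̂_h := û_h + P̂_h(Q̂_{h+1}). Then for every h ∈ {1,…,H+1}, Q_h − Q̂_h = ∑_{h'=h}^{H} (P̂_h ∘ P̂_{h+1} ∘ ⋯ ∘ P̂_{h'-1}) (Q_{h'} − û_{h'} − P̂_{h'}(Q_{h'+1})), where the composition over an empty index range (the case h' = h) is the identity map. -/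
/-!
Subtracting the recursion for `Q̂` shows that the error `e h = Q h - Q̂ h` satisfies
`e h = r h + P̂ h (e (h + 1))` with `e (H + 1) = 0`, where `r h = Q h - û h - P̂ h (Q (h + 1))`
is the Bellman residual. Unrolling a backward linear recursion with zero terminal value expresses
`e h` as the sum of the residuals `r h'` transported back to step `h` by `P̂ h ∘ ⋯ ∘ P̂ (h' - 1)`.
-/

/-- The composition `P h ∘ P (h+1) ∘ ⋯ ∘ P (h'-1)`, equal to the identity map when `h' ≤ h`. -/
noncomputable def compRange {V : Type*} [AddCommGroup V] [Module ℝ V]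
    (P : ℕ → V →ₗ[ℝ] V) (h h' : ℕ) : V →ₗ[ℝ] V :=
  (List.range (h' - h)).foldr (fun i acc => (P (h + i)).comp acc) LinearMap.id

section

variable {V : Type*} [AddCommGroup V] [Module ℝ V] (P : ℕ → V →ₗ[ℝ] V)

theorem compRange_self (h : ℕ) : compRange P h h = LinearMap.id := by
  simp [compRange]

theorem compRange_eq_comp_succ {h h' : ℕ} (hlt : h < h') :
    compRange P h h' = (P h).comp (compRange P (h + 1) h') := by
  obtain ⟨n, hn⟩ : ∃ n, h' - h = n + 1 := ⟨h' - h - 1, by omega⟩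
  have hn' : h' - (h + 1) = n := by omega
  simp only [compRange, hn, hn', List.range_succ_eq_map, List.foldr_cons, List.foldr_map,
    Nat.add_zero, Nat.succ_eq_add_one, ← add_assoc, add_right_comm h]

theorem sum_Icc_compRange_eq_add {h H : ℕ} (hH : h ≤ H) (r : ℕ → V) :
    ∑ h' ∈ Finset.Icc h H, compRange P h h' (r h') =
      r h + P h (∑ h' ∈ Finset.Icc (h + 1) H, compRange P (h + 1) h' (r h')) := by
  rw [Finset.Icc_eq_cons_Ioc hH, Finset.sum_cons, ← Finset.Icc_add_one_left_eq_Ioc, compRange_self,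
    map_sum]
  congr 1
  refine Finset.sum_congr rfl fun h' hh' => ?_
  rw [compRange_eq_comp_succ P (by simp only [Finset.mem_Icc] at hh'; omega)]
  rfl

theorem eq_sum_compRange_of_backward_recursion {a H : ℕ} {e r : ℕ → V} (htop : e (H + 1) = 0)
    (hrec : ∀ h, a ≤ h → h ≤ H → e h = r h + P h (e (h + 1))) {h : ℕ} (ha : a ≤ h)
    (hH : h ≤ H + 1) : e h = ∑ h' ∈ Finset.Icc h H, compRange P h h' (r h') := by
  induction hH using Nat.decreasingInduction with
  | self => simp [htop]
  | of_succ k hk ih =>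
    rw [sum_Icc_compRange_eq_add P (by omega), ← ih (by omega), hrec k ha (by omega)]

end

theorem backward_linear_recursion_error_decomposition_general
    {V : Type*} [AddCommGroup V] [Module ℝ V] (H : ℕ)
    (Phat : ℕ → V →ₗ[ℝ] V) (uhat : ℕ → V) (Q Qhat : ℕ → V)
    (hQtop : Q (H + 1) = 0)
    (hQhattop : Qhat (H + 1) = 0)
    (hQhatrec : ∀ h, 1 ≤ h → h ≤ H → Qhat h = uhat h + Phat h (Qhat (h + 1))) :
    ∀ h, 1 ≤ h → h ≤ H + 1 →
      Q h - Qhat h =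
        ∑ h' ∈ Finset.Icc h H,
          compRange Phat h h' (Q h' - uhat h' - Phat h' (Q (h' + 1))) := by
  have hrec : ∀ h, 1 ≤ h → h ≤ H → Q h - Qhat h =
      (Q h - uhat h - Phat h (Q (h + 1))) + Phat h (Q (h + 1) - Qhat (h + 1)) := by
    intro h h1 hH
    rw [hQhatrec h h1 hH, map_sub]
    abel
  intro h h1 hH
  exact eq_sum_compRange_of_backward_recursion Phat (by rw [hQtop, hQhattop, sub_self]) hrec h1 hH

theorem backward_linear_recursion_error_decomposition
    {V : Type*} [AddCommGroup V] [Module ℝ V] (H : ℕ)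
    (P Phat : ℕ → V →ₗ[ℝ] V) (u uhat : ℕ → V) (Q Qhat : ℕ → V)
    (hQtop : Q (H + 1) = 0)
    (hQrec : ∀ h, 1 ≤ h → h ≤ H → Q h = u h + P h (Q (h + 1)))
    (hQhattop : Qhat (H + 1) = 0)
    (hQhatrec : ∀ h, 1 ≤ h → h ≤ H → Qhat h = uhat h + Phat h (Qhat (h + 1))) :
    ∀ h, 1 ≤ h → h ≤ H + 1 →
      Q h - Qhat h =
        ∑ h' ∈ Finset.Icc h H,
          compRange Phat h h' (Q h' - uhat h' - Phat h' (Q (h' + 1))) :=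
  backward_linear_recursion_error_decomposition_general H Phat uhat Q Qhat hQtop hQhattop hQhatrec
end

section
/- In the tabular MDP setting, fix θ ∈ ℝ^m and an initial distribution ξ : S → ℝ with ξ(s) ≥ 0 and ∑_s ξ(s) = 1; define the occupancy measures μ_{θ,1}(s,a) := ξ(s) π_{θ,1}(s)(a) and μ_{θ,h+1}(s',a') := ∑_{s,a} μ_{θ,h}(s,a) p_h(s,a)(s') π_{θ,h+1}(s')(a'). Let φ : S × A → ℝ^d be a feature map and Σ_{θ,h} := ∑_{s,a} μ_{θ,h}(s,a) φ(s,a)φ(s,a)ᵀ. Fix h ∈ {1,…,H} and suppose Σ_{θ,h} and Σ_{θ,h+1} are positive definite. (a) If M is a real d×d matrix with φ(s,a)ᵀ M = ∑_{s'} p_h(s,a)(s') ∑_{a'} π_{θ,h+1}(s')(a') φ(s',a')ᵀ for all (s,a), then ‖Σ_{θ,h}^{1/2} M Σ_{θ,h+1}^{-1/2}‖ ≤ 1. (b) If G ≥ 0, c : S × A → ℝ satisfies |c(s',a')| ≤ G for all (s',a'), and N is a real d×d matrix with φ(s,a)ᵀ N = ∑_{s'} p_h(s,a)(s') ∑_{a'}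 π_{θ,h+1}(s')(a') c(s',a') φ(s',a')ᵀ for all (s,a), then ‖Σ_{θ,h}^{1/2} N Σ_{θ,h+1}^{-1/2}‖ ≤ G. -/
open Finset Matrix

/-- The spectral norm (ℓ²→ℓ² operator norm) of a real square matrix. -/
noncomputable def specNorm {d : ℕ} (A : Matrix (Fin d) (Fin d) ℝ) : ℝ :=
  ‖Matrix.toEuclideanCLM (𝕜 := ℝ) A‖

open Classical in
/-- The positive semidefinite square root of a positive semidefinite real matrix
(junk value `0` on matrices that are not positive semidefinite). -/
noncomputable def msqrt {d : ℕ} (A : Matrix (Fin d) (Fin d) ℝ) : Matrix (Fin d) (Fin d) ℝ :=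
  if h : A.PosSemidef then
    h.1.eigenvectorUnitary.1 * diagonal ((↑) ∘ (√·) ∘ h.1.eigenvalues) *
      (star h.1.eigenvectorUnitary : Matrix (Fin d) (Fin d) ℝ) else 0

/-!
Write `P = Σ_{θ,h}` and `Q = Σ_{θ,h+1}`. Substituting `x = P^{1/2} u`, `y = Q^{1/2} w`, the bound
`‖P^{1/2} N Q^{-1/2}‖ ≤ G` becomes `uᵀ P N w ≤ G √(uᵀ P u) √(wᵀ Q w)`. The feature identity for `N`
writes `uᵀ P N w` as `∑ W(z, z') c(z') (uᵀ φ z) (φ z'ᵀ w)`, where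
`W(z, z') = μ_{θ,h}(z) p_h(z)(s') π_{θ,h+1}(s')(a')` is the joint law of two consecutive
state-action pairs `z, z' = (s', a')`. Its marginals are `μ_{θ,h}` and `μ_{θ,h+1}`, so weighted
Cauchy–Schwarz bounds the sum by `G` times the square roots of the quadratic forms of `P` and `Q`.
Part (a) is the case `c ≡ 1`.
-/

open scoped MatrixOrder

section SquareRoot

variable {d : ℕ} {A : Matrix (Fin d) (Fin d) ℝ}

theorem msqrt_eq_cfcSqrt (hA : A.PosSemidef) : msqrt A = CFC.sqrt A := by
  rw [msqrt, dif_pos hA, CFC.sqrt_eq_real_sqrt A hA.nonneg, cfcₙ_eq_cfc, hA.1.cfc_eq]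
  rfl

theorem msqrt_mul_msqrt (hA : A.PosSemidef) : msqrt A * msqrt A = A := by
  rw [msqrt_eq_cfcSqrt hA, CFC.sqrt_mul_sqrt_self A hA.nonneg]

theorem transpose_msqrt (hA : A.PosSemidef) : (msqrt A)ᵀ = msqrt A := by
  rw [msqrt_eq_cfcSqrt hA, ← conjTranspose_eq_transpose_of_trivial]
  exact (CFC.sqrt_nonneg A).isSelfAdjoint

theorem isUnit_msqrt (hA : A.PosDef) : IsUnit (msqrt A) := by
  rw [msqrt_eq_cfcSqrt hA.posSemidef, CFC.isUnit_sqrt_iff A hA.posSemidef.nonneg]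
  exact hA.isUnit

end SquareRoot

theorem specNorm_le_of_dotProduct_mulVec_le {d : ℕ} {B : Matrix (Fin d) (Fin d) ℝ} {G : ℝ}
    (hG : 0 ≤ G) (hB : ∀ x y, x ⬝ᵥ B *ᵥ y ≤ G * √(x ⬝ᵥ x) * √(y ⬝ᵥ y)) :
    specNorm B ≤ G := by
  refine ContinuousLinearMap.opNorm_le_of_re_inner_le hG fun x y hx hy => ?_
  have hnorm (v : EuclideanSpace ℝ (Fin d)) : ‖v‖ = √(v.ofLp ⬝ᵥ v.ofLp) := by
    rw [norm_eq_sqrt_real_inner, EuclideanSpace.inner_eq_star_dotProduct, star_trivial]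
  rw [RCLike.re_to_real, real_inner_comm, inner_toEuclideanCLM]
  simpa [← hnorm, hx, hy] using hB y.ofLp x.ofLp

theorem dotProduct_mul_mulVec_eq_inv_mulVec {n : Type*} [Fintype n] [DecidableEq n]
    {R P : Matrix n n ℝ} (hRP : R * R = P) (hR : Rᵀ = R) (hRu : IsUnit R) (K : Matrix n n ℝ)
    (x y : n → ℝ) : x ⬝ᵥ (R * K) *ᵥ y = (R⁻¹ *ᵥ x) ⬝ᵥ (P * K) *ᵥ y := by
  have hRinv : R⁻¹ * R = 1 := nonsing_inv_mul R ((isUnit_iff_isUnit_det R).1 hRu)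
  rw [← hR, ← transpose_nonsing_inv, mulVec_transpose, dotProduct_mulVec, dotProduct_mulVec,
    vecMul_vecMul, ← hRP, hR, ← Matrix.mul_assoc, ← Matrix.mul_assoc, hRinv, Matrix.one_mul]

theorem specNorm_msqrt_mul_mul_inv_msqrt_le {d : ℕ} {P Q N : Matrix (Fin d) (Fin d) ℝ} {G : ℝ}
    (hP : P.PosDef) (hQ : Q.PosDef) (hG : 0 ≤ G)
    (hPN : ∀ u w, u ⬝ᵥ (P * N) *ᵥ w ≤ G * √(u ⬝ᵥ P *ᵥ u) * √(w ⬝ᵥ Q *ᵥ w)) :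
    specNorm (msqrt P * N * (msqrt Q)⁻¹) ≤ G := by
  have whiten {A : Matrix (Fin d) (Fin d) ℝ} (hA : A.PosDef) (K : Matrix (Fin d) (Fin d) ℝ) :=
    dotProduct_mul_mulVec_eq_inv_mulVec (msqrt_mul_msqrt hA.posSemidef)
      (transpose_msqrt hA.posSemidef) (isUnit_msqrt hA) K
  have hnorm {A : Matrix (Fin d) (Fin d) ℝ} (hA : A.PosDef) (x : Fin d → ℝ) :
      x ⬝ᵥ x = ((msqrt A)⁻¹ *ᵥ x) ⬝ᵥ A *ᵥ ((msqrt A)⁻¹ *ᵥ x) := by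
    have hinv : msqrt A * (msqrt A)⁻¹ = 1 :=
      mul_nonsing_inv _ ((isUnit_iff_isUnit_det _).1 (isUnit_msqrt hA))
    simpa [hinv, Matrix.mul_assoc, mulVec_mulVec] using whiten hA (msqrt A)⁻¹ x x
  refine specNorm_le_of_dotProduct_mulVec_le hG fun x y => ?_
  rw [Matrix.mul_assoc, whiten hP, ← Matrix.mul_assoc, ← mulVec_mulVec, hnorm hP x, hnorm hQ y]
  exact hPN _ _

section Coupling

variable {ι κ n : Type*} [Fintype ι] [Fintype κ] [Fintype n]

theorem dotProduct_sum_smul_vecMulVec_mulVec (r : ι → ℝ) (f g : ι → n → ℝ) (u w : n → ℝ) :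
    u ⬝ᵥ (∑ i, r i • vecMulVec (f i) (g i)) *ᵥ w = ∑ i, r i * (u ⬝ᵥ f i) * (g i ⬝ᵥ w) := by
  simp only [sum_mulVec, smul_mulVec, vecMulVec_mulVec, dotProduct_sum, dotProduct_smul,
    op_smul_eq_mul, smul_eq_mul]
  exact sum_congr rfl fun i _ => by ring

theorem sum_sum_mul_le_sqrt_mul_sqrt {W c : ι → κ → ℝ} {G : ℝ} (hW : ∀ i k, 0 ≤ W i k)
    (hG : 0 ≤ G) (hc : ∀ i k, |c i k| ≤ G) (X : ι → ℝ) (Y : κ → ℝ) :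
    ∑ i, ∑ k, W i k * c i k * X i * Y k ≤
      G * √(∑ i, (∑ k, W i k) * X i ^ 2) * √(∑ k, (∑ i, W i k) * Y k ^ 2) := by
  have hcs := Real.sum_mul_le_sqrt_mul_sqrt univ (fun z : ι × κ => √(W z.1 z.2) * X z.1)
    (fun z => √(W z.1 z.2) * (c z.1 z.2 * Y z.2))
  have hsq (z : ι × κ) (a : ℝ) : (√(W z.1 z.2) * a) ^ 2 = W z.1 z.2 * a ^ 2 := by
    rw [mul_pow, Real.sq_sqrt (hW _ _)]
  have hcY : ∑ z : ι × κ, W z.1 z.2 * (c z.1 z.2 * Y z.2) ^ 2 ≤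
      G ^ 2 * ∑ z : ι × κ, W z.1 z.2 * Y z.2 ^ 2 := by
    rw [mul_sum]
    refine sum_le_sum fun z _ => ?_
    have : c z.1 z.2 ^ 2 ≤ G ^ 2 := sq_le_sq' (abs_le.1 (hc _ _)).1 (abs_le.1 (hc _ _)).2
    calc W z.1 z.2 * (c z.1 z.2 * Y z.2) ^ 2 = W z.1 z.2 * Y z.2 ^ 2 * c z.1 z.2 ^ 2 := by ring
      _ ≤ W z.1 z.2 * Y z.2 ^ 2 * G ^ 2 :=
          mul_le_mul_of_nonneg_left this (mul_nonneg (hW _ _) (sq_nonneg _))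
      _ = G ^ 2 * (W z.1 z.2 * Y z.2 ^ 2) := by ring
  calc ∑ i, ∑ k, W i k * c i k * X i * Y k
      = ∑ z : ι × κ, √(W z.1 z.2) * X z.1 * (√(W z.1 z.2) * (c z.1 z.2 * Y z.2)) := by
        rw [← Fintype.sum_prod_type']
        refine sum_congr rfl fun z _ => ?_
        rw [mul_mul_mul_comm, Real.mul_self_sqrt (hW z.1 z.2)]
        ring
    _ ≤ √(∑ z : ι × κ, W z.1 z.2 * X z.1 ^ 2) *
          √(∑ z : ι × κ, W z.1 z.2 * (c z.1 z.2 * Y z.2) ^ 2) := by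
        simpa only [hsq] using hcs
    _ ≤ √(∑ z : ι × κ, W z.1 z.2 * X z.1 ^ 2) *
          √(G ^ 2 * ∑ z : ι × κ, W z.1 z.2 * Y z.2 ^ 2) := by
        gcongr
    _ = G * √(∑ i, (∑ k, W i k) * X i ^ 2) * √(∑ k, (∑ i, W i k) * Y k ^ 2) := by
        rw [Real.sqrt_mul (sq_nonneg G), Real.sqrt_sq hG, Fintype.sum_prod_type,
          Fintype.sum_prod_type_right]
        simp only [sum_mul]
        ring

theorem dotProduct_mul_mulVec_le_of_kernel {μ : ι → ℝ} (hμ : ∀ i, 0 ≤ μ i) {K : ι → κ → ℝ}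
    (hK : ∀ i k, 0 ≤ K i k) (hK1 : ∀ i, ∑ k, K i k = 1) {c : κ → ℝ} {G : ℝ} (hG : 0 ≤ G)
    (hc : ∀ k, |c k| ≤ G) (f : ι → n → ℝ) (g : κ → n → ℝ) {N : Matrix n n ℝ}
    (hN : ∀ i, f i ᵥ* N = ∑ k, (K i k * c k) • g k) (u w : n → ℝ) :
    u ⬝ᵥ ((∑ i, μ i • vecMulVec (f i) (f i)) * N) *ᵥ w ≤
      G * √(u ⬝ᵥ (∑ i, μ i • vecMulVec (f i) (f i)) *ᵥ u) *
        √(w ⬝ᵥ (∑ k, (∑ i, μ i * K i k) • vecMulVec (g k) (g k)) *ᵥ w) := by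
  have hPN : u ⬝ᵥ ((∑ i, μ i • vecMulVec (f i) (f i)) * N) *ᵥ w =
      ∑ i, ∑ k, μ i * K i k * c k * (u ⬝ᵥ f i) * (g k ⬝ᵥ w) := by
    rw [← mulVec_mulVec, dotProduct_sum_smul_vecMulVec_mulVec]
    refine sum_congr rfl fun i _ => ?_
    rw [dotProduct_mulVec, hN i, sum_dotProduct, mul_sum]
    refine sum_congr rfl fun k _ => ?_
    rw [smul_dotProduct, smul_eq_mul]
    ring
  have hP : u ⬝ᵥ (∑ i, μ i • vecMulVec (f i) (f i)) *ᵥ u =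
      ∑ i, (∑ k, μ i * K i k) * (u ⬝ᵥ f i) ^ 2 := by
    rw [dotProduct_sum_smul_vecMulVec_mulVec]
    refine sum_congr rfl fun i _ => ?_
    rw [← mul_sum, hK1, dotProduct_comm (f i) u]
    ring
  have hQ : w ⬝ᵥ (∑ k, (∑ i, μ i * K i k) • vecMulVec (g k) (g k)) *ᵥ w =
      ∑ k, (∑ i, μ i * K i k) * (g k ⬝ᵥ w) ^ 2 := by
    rw [dotProduct_sum_smul_vecMulVec_mulVec]
    refine sum_congr rfl fun k _ => ?_
    rw [dotProduct_comm w (g k)]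
    ring
  rw [hPN, hP, hQ]
  exact sum_sum_mul_le_sqrt_mul_sqrt (c := fun _ k => c k)
    (fun i k => mul_nonneg (hμ i) (hK i k)) hG (fun _ k => hc k) _ _

end Coupling

section TabularMDP

variable {S A : Type*}

def stateActionKernel (p : S → A → S → ℝ) (π : S → A → ℝ) (z z' : S × A) : ℝ :=
  p z.1 z.2 z'.1 * π z'.1 z'.2

theorem stateActionKernel_nonneg {p : S → A → S → ℝ} {π : S → A → ℝ}
    (hp : ∀ s a s', 0 ≤ p s a s') (hπ : ∀ s a, 0 ≤ π s a) (z z' : S × A) :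
    0 ≤ stateActionKernel p π z z' :=
  mul_nonneg (hp _ _ _) (hπ _ _)

variable [Fintype S] [Fintype A]

theorem sum_stateActionKernel {p : S → A → S → ℝ} {π : S → A → ℝ}
    (hp : ∀ s a, ∑ s', p s a s' = 1) (hπ : ∀ s, ∑ a, π s a = 1) (z : S × A) :
    ∑ z', stateActionKernel p π z z' = 1 := by
  simp only [stateActionKernel, Fintype.sum_prod_type, ← mul_sum, hπ, mul_one, hp]

theorem vecMul_eq_sum_stateActionKernel_smul {d : ℕ} {p : S → A → S → ℝ} {π c : S → A → ℝ}
    {φ : S → A → Fin d → ℝ} {N : Matrix (Fin d) (Fin d) ℝ}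
    (hN : ∀ s a j, (φ s a ᵥ* N) j = ∑ s', p s a s' * ∑ a', π s' a' * c s' a' * φ s' a' j)
    (z : S × A) :
    φ z.1 z.2 ᵥ* N =
      ∑ z', (stateActionKernel p π z z' * c z'.1 z'.2) • φ z'.1 z'.2 := by
  ext j
  simp only [hN, Finset.sum_apply, Pi.smul_apply, smul_eq_mul, Fintype.sum_prod_type, mul_sum,
    stateActionKernel]
  exact sum_congr rfl fun s' _ => sum_congr rfl fun a' _ => by ring

theorem occupancy_nonneg {H : ℕ} {p : ℕ → S → A → S → ℝ} {π μ : ℕ → S → A → ℝ}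
    (hp : ∀ h, 1 ≤ h → h ≤ H → ∀ s a s', 0 ≤ p h s a s')
    (hπ : ∀ h, 1 ≤ h → h ≤ H + 1 → ∀ s a, 0 ≤ π h s a) (hμ1 : ∀ s a, 0 ≤ μ 1 s a)
    (hμrec : ∀ h, 1 ≤ h → h ≤ H → ∀ s' a',
      μ (h + 1) s' a' = ∑ s, ∑ a, μ h s a * p h s a s' * π (h + 1) s' a')
    {h : ℕ} (hh1 : 1 ≤ h) (hhH : h ≤ H + 1) (s : S) (a : A) : 0 ≤ μ h s a := by
  induction h, hh1 using Nat.le_induction generalizing s a with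
  | base => exact hμ1 s a
  | succ k hk ih =>
    rw [hμrec k hk (by omega)]
    exact sum_nonneg fun s _ => sum_nonneg fun a _ => mul_nonneg
      (mul_nonneg (ih (by omega) s a) (hp k hk (by omega) s a _)) (hπ _ (by omega) hhH _ _)

theorem specNorm_msqrt_occupancy_transition_le {d : ℕ} {μ μ' : S → A → ℝ} {p : S → A → S → ℝ}
    {π : S → A → ℝ} {φ : S → A → Fin d → ℝ} {P Q : Matrix (Fin d) (Fin d) ℝ}
    (hμ : ∀ s a, 0 ≤ μ s a) (hp_nonneg : ∀ s a s', 0 ≤ p s a s')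
    (hp_sum : ∀ s a, ∑ s', p s a s' = 1) (hπ_nonneg : ∀ s a, 0 ≤ π s a)
    (hπ_sum : ∀ s, ∑ a, π s a = 1)
    (hμ' : ∀ s' a', μ' s' a' = ∑ s, ∑ a, μ s a * p s a s' * π s' a')
    (hP : P = ∑ s, ∑ a, μ s a • vecMulVec (φ s a) (φ s a))
    (hQ : Q = ∑ s, ∑ a, μ' s a • vecMulVec (φ s a) (φ s a))
    (hP_pos : P.PosDef) (hQ_pos : Q.PosDef) (G : ℝ) (hG : 0 ≤ G) (c : S → A → ℝ)
    (hc : ∀ s' a', |c s' a'| ≤ G) (N : Matrix (Fin d) (Fin d) ℝ)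
    (hN : ∀ s a j, (φ s a ᵥ* N) j = ∑ s', p s a s' * ∑ a', π s' a' * c s' a' * φ s' a' j) :
    specNorm (msqrt P * N * (msqrt Q)⁻¹) ≤ G := by
  refine specNorm_msqrt_mul_mul_inv_msqrt_le hP_pos hQ_pos hG fun u w => ?_
  have hP' : P = ∑ z : S × A, μ z.1 z.2 • vecMulVec (φ z.1 z.2) (φ z.1 z.2) := by
    rw [hP, Fintype.sum_prod_type]
  have hQ' : Q = ∑ z' : S × A, (∑ z : S × A, μ z.1 z.2 * stateActionKernel p π z z') •
      vecMulVec (φ z'.1 z'.2) (φ z'.1 z'.2) := by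
    simp only [hQ, Fintype.sum_prod_type, hμ', stateActionKernel, mul_assoc]
  rw [hP', hQ']
  have key := dotProduct_mul_mulVec_le_of_kernel (μ := fun z => μ z.1 z.2)
    (c := fun z => c z.1 z.2) (fun z => hμ z.1 z.2)
    (stateActionKernel_nonneg hp_nonneg hπ_nonneg) (sum_stateActionKernel hp_sum hπ_sum) hG
    (fun z => hc z.1 z.2) (fun z => φ z.1 z.2) (fun z => φ z.1 z.2)
    (vecMul_eq_sum_stateActionKernel_smul hN) u w
  beta_reduce at key
  exact key

end TabularMDP

theorem occupancy_transition_contraction_general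
    {S A : Type*} [Fintype S] [Fintype A]
    (m H d : ℕ)
    (p : ℕ → S → A → S → ℝ)
    (π : (Fin m → ℝ) → ℕ → S → A → ℝ) (θ : Fin m → ℝ)
    (ξ : S → ℝ)
    (hp_nonneg : ∀ h, 1 ≤ h → h ≤ H → ∀ s a s', 0 ≤ p h s a s')
    (hp_sum : ∀ h, 1 ≤ h → h ≤ H → ∀ s a, ∑ s', p h s a s' = 1)
    (hπ_nonneg : ∀ θ' h, 1 ≤ h → h ≤ H + 1 → ∀ s a, 0 ≤ π θ' h s a)
    (hπ_sum : ∀ θ' h, 1 ≤ h → h ≤ H + 1 → ∀ s, ∑ a, π θ' h s a = 1)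
    (hξ_nonneg : ∀ s, 0 ≤ ξ s)
    (μ : ℕ → S → A → ℝ)
    (hμ1 : ∀ s a, μ 1 s a = ξ s * π θ 1 s a)
    (hμrec : ∀ h, 1 ≤ h → h ≤ H → ∀ s' a',
      μ (h + 1) s' a' = ∑ s, ∑ a, μ h s a * p h s a s' * π θ (h + 1) s' a')
    (φ : S → A → Fin d → ℝ)
    (Sig : ℕ → Matrix (Fin d) (Fin d) ℝ)
    (hSig : ∀ h, Sig h = ∑ s, ∑ a, μ h s a • vecMulVec (φ s a) (φ s a))
    (h : ℕ) (hh1 : 1 ≤ h) (hhH : h ≤ H)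
    (hpos : (Sig h).PosDef) (hpos' : (Sig (h + 1)).PosDef) :
    (∀ M : Matrix (Fin d) (Fin d) ℝ,
      (∀ s a (j : Fin d),
        (φ s a ᵥ* M) j = ∑ s', p h s a s' * ∑ a', π θ (h + 1) s' a' * φ s' a' j) →
      specNorm (msqrt (Sig h) * M * (msqrt (Sig (h + 1)))⁻¹) ≤ 1) ∧
    (∀ G : ℝ, 0 ≤ G → ∀ c : S → A → ℝ, (∀ s' a', |c s' a'| ≤ G) →
      ∀ N : Matrix (Fin d) (Fin d) ℝ,
      (∀ s a (j : Fin d),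
        (φ s a ᵥ* N) j = ∑ s', p h s a s' * ∑ a', π θ (h + 1) s' a' * c s' a' * φ s' a' j) →
      specNorm (msqrt (Sig h) * N * (msqrt (Sig (h + 1)))⁻¹) ≤ G) := by
  have hμ : ∀ s a, 0 ≤ μ h s a :=
    occupancy_nonneg hp_nonneg (hπ_nonneg θ)
      (fun s a => hμ1 s a ▸ mul_nonneg (hξ_nonneg s) (hπ_nonneg θ 1 le_rfl (by omega) s a))
      hμrec hh1 (by omega)
  have step := specNorm_msqrt_occupancy_transition_le hμ (hp_nonneg h hh1 hhH)
    (hp_sum h hh1 hhH) (hπ_nonneg θ (h + 1) (by omega) (by omega))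
    (hπ_sum θ (h + 1) (by omega) (by omega)) (hμrec h hh1 hhH) (hSig h) (hSig (h + 1)) hpos hpos'
  exact ⟨fun M hM => step 1 zero_le_one (fun _ _ => 1) (fun _ _ => by simp) M
    (by simpa only [mul_one] using hM), step⟩

theorem occupancy_transition_contraction
    {S A : Type*} [Fintype S] [Fintype A] [Nonempty S] [Nonempty A]
    (m H d : ℕ)
    (p : ℕ → S → A → S → ℝ)
    (π : (Fin m → ℝ) → ℕ → S → A → ℝ) (θ : Fin m → ℝ)
    (ξ : S → ℝ)
    (hp_nonneg : ∀ h, 1 ≤ h → h ≤ H → ∀ s a s', 0 ≤ p h s a s')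
    (hp_sum : ∀ h, 1 ≤ h → h ≤ H → ∀ s a, ∑ s', p h s a s' = 1)
    (hπ_nonneg : ∀ θ' h, 1 ≤ h → h ≤ H + 1 → ∀ s a, 0 ≤ π θ' h s a)
    (hπ_sum : ∀ θ' h, 1 ≤ h → h ≤ H + 1 → ∀ s, ∑ a, π θ' h s a = 1)
    (hξ_nonneg : ∀ s, 0 ≤ ξ s) (hξ_sum : ∑ s, ξ s = 1)
    (μ : ℕ → S → A → ℝ)
    (hμ1 : ∀ s a, μ 1 s a = ξ s * π θ 1 s a)
    (hμrec : ∀ h, 1 ≤ h → h ≤ H → ∀ s' a',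
      μ (h + 1) s' a' = ∑ s, ∑ a, μ h s a * p h s a s' * π θ (h + 1) s' a')
    (φ : S → A → Fin d → ℝ)
    (Sig : ℕ → Matrix (Fin d) (Fin d) ℝ)
    (hSig : ∀ h, Sig h = ∑ s, ∑ a, μ h s a • vecMulVec (φ s a) (φ s a))
    (h : ℕ) (hh1 : 1 ≤ h) (hhH : h ≤ H)
    (hpos : (Sig h).PosDef) (hpos' : (Sig (h + 1)).PosDef) :
    (∀ M : Matrix (Fin d) (Fin d) ℝ,
      (∀ s a (j : Fin d),
        (φ s a ᵥ* M) j = ∑ s', p h s a s' * ∑ a', π θ (h + 1) s' a' * φ s' a' j) →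
      specNorm (msqrt (Sig h) * M * (msqrt (Sig (h + 1)))⁻¹) ≤ 1) ∧
    (∀ G : ℝ, 0 ≤ G → ∀ c : S → A → ℝ, (∀ s' a', |c s' a'| ≤ G) →
      ∀ N : Matrix (Fin d) (Fin d) ℝ,
      (∀ s a (j : Fin d),
        (φ s a ᵥ* N) j = ∑ s', p h s a s' * ∑ a', π θ (h + 1) s' a' * c s' a' * φ s' a' j) →
      specNorm (msqrt (Sig h) * N * (msqrt (Sig (h + 1)))⁻¹) ≤ G) :=
  occupancy_transition_contraction_general m H d p π θ ξ hp_nonneg hp_sum hπ_nonneg hπ_sum hξ_nonneg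
    μ hμ1 hμrec φ Sig hSig h hh1 hhH hpos hpos'
end
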